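/- If X ∼ χ²_k is a central chi-square random variable with k degrees of freedom, then for any x > 0, P(X ≥ k + 2√(kx) + 2x) ≤ e^{−x}. -/

import Mathlib

/-!
The χ²_k law is the Gamma law of shape k/2 and rate 1/2, and tilting a Gamma density by
`exp (l * y)` gives a multiple of another Gamma density, so the moment generating function is
`(1 - 2l)^(-k/2)`. The Chernoff bound at the threshold `t = k + 2√(kx) + 2x`, with `l` chosen so
that `1 - 2l = k/t`, gives `exp (-(√(kx) + x)) * (t/k)^(k/2)`, and `t/k = 1 + 2u + 2u²` with
`u = √(x/k)` is at most `exp (2u)`, which turns the power into `exp √(kx)`.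
-/

open MeasureTheory ProbabilityTheory Set

/-- Density of the χ²_k distribution with k (real) degrees of freedom. -/
noncomputable def chiSqPDF (k x : ℝ) : ℝ :=
  if 0 ≤ x then
    x ^ (k / 2 - 1) * Real.exp (-x / 2) / (2 ^ (k / 2) * Real.Gamma (k / 2))
  else 0

open Real

theorem chiSqPDF_eq_gammaPDFReal (k : ℝ) : chiSqPDF k = gammaPDFReal (k / 2) (1 / 2) := by
  ext y
  unfold chiSqPDF gammaPDFReal
  split_ifs
  · rw [div_rpow zero_le_one zero_le_two, one_rpow]
    ring_nf
  · rfl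

theorem exp_mul_mul_gammaPDFReal {a r l : ℝ} (hr : 0 ≤ r) (hl : l < r) (y : ℝ) :
    exp (l * y) * gammaPDFReal a r y = (r / (r - l)) ^ a * gammaPDFReal a (r - l) y := by
  unfold gammaPDFReal
  split_ifs
  · have hrl : 0 < r - l := sub_pos.2 hl
    rw [div_rpow hr hrl.le]
    field_simp
    rw [show -(y * (r - l)) = l * y + -(y * r) by ring, exp_add]
    ring
  · simp

theorem lintegral_exp_mul_gammaMeasure {a r l : ℝ} (ha : 0 < a) (hr : 0 < r) (hl : l < r) :
    ∫⁻ y, ENNReal.ofReal (exp (l * y)) ∂gammaMeasure a r = ENNReal.ofReal ((r / (r - l)) ^ a) := by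
  have hpdf_meas : ∀ a r, Measurable (gammaPDF a r) := fun a r =>
    (measurable_gammaPDFReal a r).ennreal_ofReal
  calc ∫⁻ y, ENNReal.ofReal (exp (l * y)) ∂gammaMeasure a r
      = ∫⁻ y, ENNReal.ofReal ((r / (r - l)) ^ a) * gammaPDF a (r - l) y := by
        rw [gammaMeasure, lintegral_withDensity_eq_lintegral_mul _ (hpdf_meas a r) (by fun_prop)]
        congr 1 with y
        simp only [Pi.mul_apply, gammaPDF]
        rw [← ENNReal.ofReal_mul (gammaPDFReal_nonneg ha hr y), mul_comm,
          exp_mul_mul_gammaPDFReal hr.le hl,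
          ENNReal.ofReal_mul (by positivity)]
    _ = ENNReal.ofReal ((r / (r - l)) ^ a) := by
        rw [lintegral_const_mul _ (hpdf_meas a (r - l)),
          lintegral_gammaPDF_eq_one ha (sub_pos.2 hl), mul_one]

theorem measure_Ici_le_exp_mul_lintegral_exp (μ : Measure ℝ) {l : ℝ} (hl : 0 ≤ l) (t : ℝ) :
    μ (Ici t) ≤ ENNReal.ofReal (exp (-(l * t))) * ∫⁻ y, ENNReal.ofReal (exp (l * y)) ∂μ := by
  rw [← lintegral_const_mul _ (by fun_prop)]
  calc μ (Ici t) = ∫⁻ y in Ici t, 1 ∂μ := (setLIntegral_one _).symm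
    _ ≤ ∫⁻ y in Ici t, ENNReal.ofReal (exp (-(l * t))) * ENNReal.ofReal (exp (l * y)) ∂μ := by
        refine setLIntegral_mono' measurableSet_Ici fun y (hy : t ≤ y) => ?_
        rw [← ENNReal.ofReal_mul (exp_nonneg _), ← exp_add, ENNReal.one_le_ofReal, one_le_exp_iff]
        nlinarith
    _ ≤ _ := setLIntegral_le_lintegral _ _

theorem gammaMeasure_Ici_le {a r l : ℝ} (ha : 0 < a) (hl0 : 0 ≤ l) (hl : l < r) (t : ℝ) :
    gammaMeasure a r (Ici t) ≤ ENNReal.ofReal (exp (-(l * t)) * (r / (r - l)) ^ a) := by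
  rw [ENNReal.ofReal_mul (exp_nonneg _), ← lintegral_exp_mul_gammaMeasure ha (hl0.trans_lt hl) hl]
  exact measure_Ici_le_exp_mul_lintegral_exp _ hl0 t

theorem add_two_sqrt_mul_add_two_div_rpow_le_exp {K x : ℝ} (hK : 0 < K) (hx : 0 ≤ x) :
    ((K + 2 * √(K * x) + 2 * x) / K) ^ (K / 2) ≤ exp √(K * x) := by
  set u := √(x / K)
  have hu : 0 ≤ u := sqrt_nonneg _
  have hKu : √(K * x) = K * u := by
    rw [show K * x = K ^ 2 * (x / K) by field_simp, sqrt_mul (sq_nonneg K), sqrt_sq hK.le]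
  have hquad : (K + 2 * √(K * x) + 2 * x) / K = 1 + 2 * u + (2 * u) ^ 2 / 2 := by
    have hx' : x = K * u ^ 2 := by rw [sq_sqrt (by positivity)]; field_simp
    rw [hKu, hx']; field_simp
  calc ((K + 2 * √(K * x) + 2 * x) / K) ^ (K / 2) ≤ exp (2 * u) ^ (K / 2) := by
        rw [hquad]
        exact rpow_le_rpow (by positivity) (quadratic_le_exp_of_nonneg (by positivity))
          (by positivity)
    _ = exp √(K * x) := by rw [← exp_mul, hKu]; ring_nf

theorem laurent_massart_chi_sq_tail_general
    {Ω : Type*} [MeasurableSpace Ω] (Pr : Measure Ω)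
    (k : ℕ) (hk : 0 < k)
    (X : Ω → ℝ) (hmeas : Measurable X)
    (hlaw : Measure.map X Pr =
      volume.withDensity fun x => ENNReal.ofReal (chiSqPDF (k : ℝ) x))
    (x : ℝ) (hx : 0 < x) :
    Pr {ω | (k : ℝ) + 2 * Real.sqrt (k * x) + 2 * x ≤ X ω}
      ≤ ENNReal.ofReal (Real.exp (-x)) := by
  set K : ℝ := (k : ℝ)
  set t := K + 2 * √(K * x) + 2 * x with ht
  have hK : 0 < K := Nat.cast_pos.2 hk
  have hKt : K ≤ t := by linarith [sqrt_nonneg (K * x)]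
  have ht0 : 0 < t := hK.trans_le hKt
  -- the optimal Chernoff parameter is `l = 1/2 - K/(2t)`
  have hrate : (1 / 2 : ℝ) - (1 / 2 - K / (2 * t)) = K / (2 * t) := by ring
  have hratio : (1 / 2) / (K / (2 * t)) = t / K := by field_simp
  have hexponent : (1 / 2 - K / (2 * t)) * t = √(K * x) + x := by field_simp; rw [ht]; ring
  have hl0 : 0 ≤ 1 / 2 - K / (2 * t) := by
    rw [sub_nonneg, div_le_iff₀ (by positivity)]; linarith
  have hl : 1 / 2 - K / (2 * t) < 1 / 2 := sub_lt_self _ (by positivity)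
  calc Pr {ω | t ≤ X ω} = gammaMeasure (K / 2) (1 / 2) (Ici t) := by
        change Pr (X ⁻¹' Ici t) = _
        rw [gammaMeasure, ← Measure.map_apply hmeas measurableSet_Ici, hlaw,
          chiSqPDF_eq_gammaPDFReal]
        rfl
    _ ≤ ENNReal.ofReal (exp (-(√(K * x) + x)) * (t / K) ^ (K / 2)) := by
        simpa only [hrate, hratio, hexponent] using
          gammaMeasure_Ici_le (by positivity) hl0 hl t
    _ ≤ ENNReal.ofReal (exp (-x)) := by
        refine ENNReal.ofReal_le_ofReal ?_
        calc exp (-(√(K * x) + x)) * (t / K) ^ (K / 2)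
            ≤ exp (-(√(K * x) + x)) * exp √(K * x) := by
              gcongr; exact add_two_sqrt_mul_add_two_div_rpow_le_exp hK hx.le
          _ = exp (-x) := by rw [← exp_add]; ring_nf

theorem laurent_massart_chi_sq_tail
    {Ω : Type*} [MeasurableSpace Ω] (Pr : Measure Ω) [IsProbabilityMeasure Pr]
    (k : ℕ) (hk : 0 < k)
    (X : Ω → ℝ) (hmeas : Measurable X)
    (hlaw : Measure.map X Pr =
      volume.withDensity fun x => ENNReal.ofReal (chiSqPDF (k : ℝ) x))
    (x : ℝ) (hx : 0 < x) :
    Pr {ω | (k : ℝ) + 2 * Real.sqrt (k * x) + 2 * x ≤ X ω}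
      ≤ ENNReal.ofReal (Real.exp (-x)) :=
  laurent_massart_chi_sq_tail_general Pr k hk X hmeas hlaw x hx
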